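/- arXiv:math/0003118 — 3 statements merged into one kernel-verified Lean document; each statement's English description precedes it below -/
import Mathlib

section
/- Let κ be regular uncountable and λ > κ an ordinal. Then λ weakly reflects at κ if and only if the cardinal |λ| weakly reflects at κ. -/
open Set Cardinal

/-- `C` is a closed unbounded (club) subset of the ordinal `d`. -/
def ClubIn (C : Set Ordinal) (d : Ordinal) : Prop :=
  C ⊆ Set.Iio d ∧ (∀ b < d, ∃ x ∈ C, b ≤ x) ∧
  ∀ b < d, (C ∩ Set.Iio b).Nonempty → sSup (C ∩ Set.Iio b) = b → b ∈ C

/-- `S` is a stationary subset of the ordinal `d`. -/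
def StatIn (S : Set Ordinal) (d : Ordinal) : Prop :=
  S ⊆ Set.Iio d ∧ ∀ C, ClubIn C d → (S ∩ C).Nonempty

/-- `l` weakly reflects at `k`. -/
def WRefl (l : Ordinal) (k : Cardinal) : Prop :=
  ∀ f : Ordinal → Ordinal, (∀ a < l, f a < k.ord) →
    ∃ d < l, d.cof = k ∧ ∀ e, ClubIn e d → ¬ StrictMonoOn f e

/-- `f` witnesses strong non-reflection of `l` at `k`. -/
def SNRw (f : Ordinal → Ordinal) (l : Ordinal) (k : Cardinal) : Prop :=
  (∀ a < l, f a < k.ord) ∧ ∀ d < l, d.cof = k → ∃ e, ClubIn e d ∧ StrictMonoOn f e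

/-- Strong non-reflection of `l` at `k`. -/
def SNR (l : Ordinal) (k : Cardinal) : Prop := ∃ f, SNRw f l k

/-! Weak reflection at `κ` fails exactly when strong non-reflection (`SNR`) holds, and `SNR` passes
down to smaller ordinals by restriction. Upwards, `SNR` passes from `l` to `l + 1` and, once it
holds below it, to every singular limit `l`. In both cases write the relevant ordinal as `B θ` for a
normal `B` (with `θ = κ`, resp. `θ = cf l`), and glue a witness for `θ + 1`, read through the index
on the club `B '' θ`, with witnesses for the ordinals `B i + 1`, each used on the gap below `B i`.
An ordinal of cofinality `κ` is either a limit point of that club, where the first witness provides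
the club, or lies inside a single gap. Above `ν`, the ordinals of cardinality at most `|ν|` are
reached from `ν` by successors and singular limits only, so `SNR ν` gives `SNR l` for all of them.
-/

open Ordinal Order

universe u

section

variable {k : Cardinal.{u}} {f : Ordinal.{u} → Ordinal.{u}} {l l' : Ordinal.{u}}

lemma wrefl_iff_not_snr : WRefl l k ↔ ¬ SNR l k := by
  simp only [WRefl, SNR, SNRw]
  push Not
  rfl

lemma SNRw.mono (h : SNRw f l k) (hle : l' ≤ l) : SNRw f l' k :=
  ⟨fun a ha => h.1 a (ha.trans_le hle), fun d hd => h.2 d (hd.trans_le hle)⟩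

lemma SNR.mono (h : SNR l k) (hle : l' ≤ l) : SNR l' k :=
  h.imp fun _ hf => hf.mono hle

lemma isSuccLimit_of_cof_eq (hk : ℵ₀ ≤ k) {d : Ordinal} (hd : d.cof = k) :
    IsSuccLimit d :=
  one_lt_cof_iff.1 (aleph0_le_cof_iff.1 (hd ▸ hk))

lemma clubIn_Iio (j : Ordinal) : ClubIn (Iio j) j :=
  ⟨subset_rfl, fun b hb => ⟨b, hb, le_rfl⟩, fun _ hb _ _ => hb⟩

lemma ClubIn.inter_Ioi {C : Set Ordinal} {d s : Ordinal} (hC : ClubIn C d) (hd : IsSuccLimit d)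
    (hs : s < d) : ClubIn (C ∩ Ioi s) d := by
  obtain ⟨hCd, hunb, hclosed⟩ := hC
  refine ⟨fun x hx => hCd hx.1, fun b hb => ?_, fun b hb hne hsup => ?_⟩
  · obtain ⟨x, hxC, hx⟩ := hunb (max b (s + 1)) (max_lt hb (hd.add_one_lt hs))
    exact ⟨x, ⟨hxC, (lt_add_one s).trans_le ((le_max_right _ _).trans hx)⟩,
      (le_max_left _ _).trans hx⟩
  · obtain ⟨x, ⟨hxC, hsx⟩, hxb⟩ := hne
    have hsub : C ∩ Ioi s ∩ Iio b ⊆ C ∩ Iio b := fun y hy => ⟨hy.1.1, hy.2⟩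
    have hbdd : BddAbove (C ∩ Iio b) := bddAbove_Iio.mono inter_subset_right
    have hsup' : sSup (C ∩ Iio b) = b :=
      (csSup_le (s := C ∩ Iio b) ⟨x, hxC, hxb⟩ fun y hy => hy.2.le).antisymm
        (hsup.ge.trans (csSup_le_csSup hbdd ⟨x, ⟨hxC, hsx⟩, hxb⟩ hsub))
    exact ⟨hclosed b hb ⟨x, hxC, hxb⟩ hsup', show s < b from hsx.trans hxb⟩

lemma ClubIn.image_of_isNormal {B : Ordinal → Ordinal} (hB : IsNormal B) {e : Set Ordinal}
    {j : Ordinal} (hj : IsSuccLimit j) (he : ClubIn e j) : ClubIn (B '' e) (B j) := by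
  obtain ⟨hej, hunb, hclosed⟩ := he
  refine ⟨image_subset_iff.2 fun i hi => hB.strictMono (hej hi), fun c hc => ?_,
    fun c hc hne hsup => ?_⟩
  · obtain ⟨i, hij, hci⟩ := (hB.lt_iff_exists_lt hj).1 hc
    obtain ⟨i', hi'e, hii'⟩ := hunb i hij
    exact ⟨B i', mem_image_of_mem B hi'e, hci.le.trans (hB.monotone hii')⟩
  · set T := e ∩ B ⁻¹' Iio c
    rw [← image_inter_preimage] at hne hsup
    have hTne : T.Nonempty := hne.of_image
    have hTbdd : BddAbove T := ⟨j, fun i hi => (hej hi.1).le⟩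
    have hBt : B (sSup T) = c := (hB.map_sSup hTne hTbdd).trans hsup
    have htT : sSup T ∉ T := fun h => (h.2 : B (sSup T) < c).ne hBt
    have heT : e ∩ Iio (sSup T) = T := by
      ext i
      refine ⟨fun hi => ⟨hi.1, hBt ▸ hB.strictMono hi.2⟩, fun hi => ⟨hi.1, ?_⟩⟩
      exact (le_csSup hTbdd hi).lt_of_ne fun h => htT (h ▸ hi)
    have htj : sSup T < j := hB.strictMono.lt_iff_lt.1 (hBt ▸ hc)
    exact ⟨sSup T, hclosed _ htj (by rw [heT]; exact hTne) (by rw [heT]), hBt⟩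

lemma isNormal_iSup_Iio_add_one (hf : StrictMono f) :
    IsNormal fun i => ⨆ j : Iio i, f j.1 + 1 := by
  have le_apply : ∀ i, ⨆ j : Iio i, f j + 1 ≤ f i := fun i =>
    Ordinal.iSup_le fun j => add_one_le_iff.2 (hf j.2)
  have add_one_le : ∀ {i i'}, i < i' → f i + 1 ≤ ⨆ j : Iio i', f j + 1 := fun {i _} h =>
    Ordinal.le_iSup (fun j : Iio _ => f j + 1) ⟨i, h⟩
  refine isNormal_iff.2 ⟨fun i i' h => (le_apply i).trans_lt ((lt_add_one _).trans_le
    (add_one_le h)), fun o ho a ha => Ordinal.iSup_le fun j => ?_⟩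
  exact (add_one_le (lt_add_one j.1)).trans (ha _ (ho.add_one_lt j.2))

lemma exists_isNormal_apply_ord_cof_eq (δ : Ordinal) :
    ∃ B : Ordinal → Ordinal, IsNormal B ∧ B δ.cof.ord = δ := by
  obtain ⟨s, hs⟩ := exists_isFundamentalSeq (o := δ) rfl
  let f : Ordinal → Ordinal := fun j => if h : j < δ.cof.ord then (s ⟨j, h⟩).1 else δ + j
  have hf : StrictMono f := by
    intro i j hij
    by_cases hj : j < δ.cof.ord
    · simp only [f, dif_pos hj, dif_pos (hij.trans hj)]
      exact hs.strictMono (show (⟨i, _⟩ : Iio _) < ⟨j, hj⟩ from hij)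
    by_cases hi : i < δ.cof.ord
    · simp only [f, dif_pos hi, dif_neg hj]
      exact (s _).2.trans_le le_self_add
    · simp only [f, dif_neg hi, dif_neg hj]
      exact add_lt_add_right hij δ
  refine ⟨_, isNormal_iSup_Iio_add_one hf, ?_⟩
  simp only [← hs.iSup_add_one_eq]
  congr! with j
  exact dif_pos j.2

lemma exists_lt_forall_apply_le {B : Ordinal → Ordinal} (hB : Monotone B) {d j : Ordinal}
    (hd : IsSuccLimit d) (hj : ¬ IsSuccLimit j) (h : ∀ i < j, B i < d) :
    ∃ s < d, ∀ i < j, B i ≤ s := by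
  rcases zero_or_succ_or_isSuccLimit j with rfl | ⟨i, rfl⟩ | hj'
  · exact ⟨0, hd.bot_lt, fun i hi => absurd hi (not_lt_bot (a := i))⟩
  · exact ⟨B i, h i (lt_succ i), fun i' hi' => hB (lt_succ_iff.1 hi')⟩
  · exact absurd hj' hj

section Glue

variable {B g : Ordinal.{u} → Ordinal.{u}} {F : Ordinal.{u} → Ordinal.{u} → Ordinal.{u}}
  {i j s d x θ : Ordinal.{u}}

noncomputable def indexAbove (B : Ordinal → Ordinal) (x : Ordinal) : Ordinal := sInf {i | x ≤ B i}

lemma le_apply_indexAbove (hB : StrictMono B) (x : Ordinal) : x ≤ B (indexAbove B x) :=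
  csInf_mem (s := {i | x ≤ B i}) ⟨x, hB.le_apply⟩

lemma indexAbove_le (h : x ≤ B i) : indexAbove B x ≤ i :=
  csInf_le' h

lemma apply_lt_of_lt_indexAbove (h : i < indexAbove B x) : B i < x :=
  not_le.1 fun h' => (indexAbove_le h').not_gt h

lemma indexAbove_apply (hB : StrictMono B) (i : Ordinal) : indexAbove B (B i) = i :=
  (indexAbove_le le_rfl).antisymm (hB.le_iff_le.1 (le_apply_indexAbove hB (B i)))

lemma indexAbove_lt (hB : IsNormal B) (hθ : IsSuccLimit θ) (hx : x < B θ) : indexAbove B x < θ :=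
  let ⟨_, hiθ, hxi⟩ := (hB.lt_iff_exists_lt hθ).1 hx
  (indexAbove_le hxi.le).trans_lt hiθ

noncomputable def glue (B g : Ordinal → Ordinal) (F : Ordinal → Ordinal → Ordinal) (x : Ordinal) :
    Ordinal :=
  if B (indexAbove B x) = x then g (indexAbove B x) else F (indexAbove B x) x

lemma glue_apply (hB : StrictMono B) (i : Ordinal) : glue B g F (B i) = g i := by
  simp [glue, indexAbove_apply hB]

lemma glue_eq_of_mem_Ioo (hB : StrictMono B) (hs : ∀ i < j, B i ≤ s) (hd : d ≤ B j)
    (hx : x ∈ Ioo s d) : glue B g F x = F j x := by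
  have hj : indexAbove B x = j := by
    refine (indexAbove_le (hx.2.le.trans hd)).antisymm (not_lt.1 fun h => ?_)
    exact (hs _ h).not_gt (hx.1.trans_le (le_apply_indexAbove hB x))
  simp [glue, hj, (hx.2.trans_le hd).ne']

theorem snrw_glue (hk : ℵ₀ ≤ k) (hB : IsNormal B) (hθ : IsSuccLimit θ)
    (hg : SNRw g (θ + 1) k) (hF : ∀ i < θ, SNRw (F i) (B i + 1) k) :
    SNRw (glue B g F) (B θ + 1) k := by
  refine ⟨fun a ha => ?_, fun d hd hdk => ?_⟩
  · rcases (lt_add_one_iff.1 ha).eq_or_lt with rfl | ha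
    · rw [glue_apply hB.strictMono]
      exact hg.1 θ (lt_add_one θ)
    have hjθ := indexAbove_lt hB hθ ha
    unfold glue
    split_ifs
    · exact hg.1 _ (hjθ.trans (lt_add_one θ))
    · exact (hF _ hjθ).1 a (lt_add_one_iff.2 (le_apply_indexAbove hB.strictMono a))
  have hdlim := isSuccLimit_of_cof_eq hk hdk
  set j := indexAbove B d
  have hjθ : j ≤ θ := indexAbove_le (lt_add_one_iff.1 hd)
  have hdj : d ≤ B j := le_apply_indexAbove hB.strictMono d
  have hbelow : ∀ i < j, B i < d := fun i => apply_lt_of_lt_indexAbove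
  by_cases hj : IsSuccLimit j
  · have hBj : B j = d :=
      hdj.antisymm' ((hB.le_iff_forall_le hj).2 fun i hi => (hbelow i hi).le)
    obtain ⟨e, he, hge⟩ :=
      hg.2 j (lt_add_one_iff.2 hjθ) (by rw [← cof_map_of_isNormal hB hj, hBj, hdk])
    refine ⟨B '' e, hBj ▸ he.image_of_isNormal hB hj, ?_⟩
    rintro _ ⟨a, ha, rfl⟩ _ ⟨b, hb, rfl⟩ hab
    rw [glue_apply hB.strictMono, glue_apply hB.strictMono]
    exact hge ha hb (hB.strictMono.lt_iff_lt.1 hab)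
  · obtain ⟨s, hsd, hs⟩ := exists_lt_forall_apply_le hB.monotone hdlim hj hbelow
    have hjθ' : j < θ := hjθ.lt_of_ne (by rintro rfl; exact hj hθ)
    obtain ⟨e, he, hFe⟩ := (hF j hjθ').2 d (lt_add_one_iff.2 hdj) hdk
    refine ⟨e ∩ Ioi s, he.inter_Ioi hdlim hsd, (hFe.mono inter_subset_left).congr fun x hx => ?_⟩
    exact (glue_eq_of_mem_Ioo hB.strictMono hs hdj ⟨hx.2, he.1 hx.1⟩).symm

end Glue

lemma snr_ord_add_one (hk : ℵ₀ ≤ k) : SNR (k.ord + 1) k := by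
  have hkpos : 0 < k.ord := (Cardinal.isSuccLimit_ord hk).bot_lt
  refine ⟨Function.update id k.ord 0, fun a ha => ?_, fun d hd hdk => ?_⟩
  · rcases (lt_add_one_iff.1 ha).eq_or_lt with rfl | ha
    · rwa [Function.update_self]
    · rwa [Function.update_of_ne ha.ne]
  have hdk' : d = k.ord := (lt_add_one_iff.1 hd).antisymm <| not_lt.1 fun h =>
    ((cof_le_card d).trans_lt (Cardinal.lt_ord.1 h)).ne hdk
  subst hdk'
  exact ⟨_, clubIn_Iio _, strictMono_id.strictMonoOn _ |>.congr fun x hx =>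
    (Function.update_of_ne (ne_of_lt hx) _ _).symm⟩

lemma snr_add_one_of_cof_ne (hk : k ≠ 0) (h : SNR l k) (hl : l.cof ≠ k) : SNR (l + 1) k := by
  obtain ⟨f, hf⟩ := h
  refine ⟨Function.update f l 0, fun a ha => ?_, fun d hd hdk => ?_⟩
  · rcases (lt_add_one_iff.1 ha).eq_or_lt with rfl | ha
    · rw [Function.update_self]
      exact Cardinal.ord_pos.2 (pos_iff_ne_zero.2 hk)
    · rw [Function.update_of_ne ha.ne]
      exact hf.1 a ha
  have hdl : d < l := (lt_add_one_iff.1 hd).lt_of_ne (by rintro rfl; exact hl hdk)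
  obtain ⟨e, he, hfe⟩ := hf.2 d hdl hdk
  exact ⟨e, he, hfe.congr fun x hx => (Function.update_of_ne ((he.1 hx).trans hdl).ne _ _).symm⟩

theorem SNR.add_one (hk : ℵ₀ ≤ k) (h : SNR l k) : SNR (l + 1) k := by
  by_cases hl : l.cof = k
  · obtain ⟨B, hB, hBl⟩ := exists_isNormal_apply_ord_cof_eq l
    rw [hl] at hBl
    obtain ⟨g, hg⟩ := snr_ord_add_one hk
    obtain ⟨f, hf⟩ := h
    have hF : ∀ i < k.ord, SNRw f (B i + 1) k := fun i hi =>
      hf.mono (add_one_le_iff.2 (hBl ▸ hB.strictMono hi))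
    exact ⟨_, hBl ▸ snrw_glue hk hB (Cardinal.isSuccLimit_ord hk) hg hF⟩
  · exact snr_add_one_of_cof_ne (Cardinal.aleph0_pos.trans_le hk).ne' h hl

theorem SNR.of_isSuccLimit (hk : ℵ₀ ≤ k) (hl : IsSuccLimit l) (hsing : l.cof.ord < l)
    (h : ∀ o < l, SNR o k) : SNR l k := by
  obtain ⟨B, hB, hBl⟩ := exists_isNormal_apply_ord_cof_eq l
  have hθ : IsSuccLimit l.cof.ord :=
    Cardinal.isSuccLimit_ord (aleph0_le_cof_iff.2 (one_lt_cof_iff.2 hl))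
  obtain ⟨g, hg⟩ := h _ (hl.add_one_lt hsing)
  have hF : ∀ i < l.cof.ord, SNR (B i + 1) k := fun i hi =>
    h _ (hl.add_one_lt (hBl ▸ hB.strictMono hi))
  choose! F hF using hF
  exact SNR.mono ⟨_, snrw_glue hk hB hθ hg hF⟩ (by rw [hBl]; exact le_self_add)

theorem SNR.of_card_le (hk : ℵ₀ ≤ k) {ν : Ordinal} (hν : SNR ν k)
    (hl : l.card ≤ ν.card) : SNR l k := by
  induction l using WellFoundedLT.induction with
  | _ l IH =>
  rcases le_or_gt l ν with hlν | hνl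
  · exact hν.mono hlν
  have hbelow : ∀ o < l, SNR o k := fun o ho => IH o ho ((card_le_card ho.le).trans hl)
  rcases zero_or_succ_or_isSuccLimit l with rfl | ⟨β, rfl⟩ | hlim
  · exact absurd hνl not_lt_bot
  · rw [succ_eq_add_one]
    exact (hbelow β (lt_succ β)).add_one hk
  · refine SNR.of_isSuccLimit hk hlim ?_ hbelow
    calc l.cof.ord ≤ l.card.ord := Cardinal.ord_le_ord.2 (cof_le_card l)
      _ ≤ ν.card.ord := Cardinal.ord_le_ord.2 hl
      _ ≤ ν := Cardinal.ord_card_le ν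
      _ < l := hνl

end

theorem stmt1_general (k : Cardinal) (hk2 : Cardinal.aleph0 < k) (l : Ordinal) :
    WRefl l k ↔ WRefl l.card.ord k := by
  rw [wrefl_iff_not_snr, wrefl_iff_not_snr, not_iff_not]
  exact ⟨fun h => h.mono (Cardinal.ord_card_le l), fun h => h.of_card_le hk2.le (card_ord _).ge⟩

/-- `λ` weakly reflects at `κ` iff the cardinal `|λ|` weakly reflects at `κ`. -/
theorem stmt1 (k : Cardinal) (hk : k.IsRegular) (hk2 : Cardinal.aleph0 < k)
    (l : Ordinal) (hl : k.ord < l) :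
    WRefl l k ↔ WRefl l.card.ord k :=
  stmt1_general k hk2 l
end

section
/- Let κ be regular uncountable, λ > κ a cardinal such that λ weakly reflects at κ. Suppose g : λ → κ and for each α < λ, g(α) is the supremum of a nonempty set G_α ⊆ κ with |G_α| < κ. If g is constant on a stationary subset S of some δ ∈ S^λ_κ, then any function f : λ → κ with f(α) ∈ G_α for all α is bounded on S (by the constant value of g plus 1), hence f is not strictly increasing on any club of δ. -/
open Set Cardinal

/-
The bound on `S` is `f α ∈ G_α ≤ sup G_α = g α = c`. Since `|G_α| < κ = cf κ`, the supremum
`c` lies below `κ`, so `f` maps `S` into the set `c + 1` of size `< κ`. On the other hand,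
for a club `e ⊆ δ`, the set `S ∩ e` is cofinal in `δ` (it meets every tail club `e ∩ [β, δ)`),
hence has size `≥ cf δ = κ`; so `f` cannot be injective, let alone strictly increasing, on `e`.
-/

universe u

theorem ClubIn.inter_Ici {e : Set Ordinal.{u}} {d b : Ordinal.{u}} (he : ClubIn e d) (hb : b < d) :
    ClubIn (e ∩ Ici b) d := by
  obtain ⟨he_sub, he_cofinal, he_closed⟩ := he
  refine ⟨fun x hx => he_sub hx.1, fun b' hb' => ?_, fun b' hb' hne hsup => ?_⟩
  · obtain ⟨x, hx, hbx⟩ := he_cofinal (max b b') (max_lt hb hb')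
    exact ⟨x, ⟨hx, (le_max_left _ _).trans hbx⟩, (le_max_right _ _).trans hbx⟩
  · obtain ⟨x, ⟨hxe, hbx⟩, hxb'⟩ := hne
    have hsup' : sSup (e ∩ Iio b') = b' := by
      refine le_antisymm (csSup_le ⟨x, hxe, hxb'⟩ fun y hy => hy.2.le) ?_
      calc b' = sSup (e ∩ Ici b ∩ Iio b') := hsup.symm
        _ ≤ sSup (e ∩ Iio b') :=
          csSup_le_csSup ⟨b', fun y hy => hy.2.le⟩ ⟨x, ⟨hxe, hbx⟩, hxb'⟩
            fun y hy => ⟨hy.1.1, hy.2⟩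
    exact ⟨he_closed b' hb' ⟨x, hxe, hxb'⟩ hsup', (mem_Ici.1 hbx).trans hxb'.le⟩

theorem StatIn.exists_mem_inter_ge {S e : Set Ordinal.{u}} {d : Ordinal.{u}} (hS : StatIn S d)
    (he : ClubIn e d) {b : Ordinal.{u}} (hb : b < d) : ∃ x ∈ S ∩ e, b ≤ x := by
  obtain ⟨x, hxS, hxe, hbx⟩ := hS.2 _ (he.inter_Ici hb)
  exact ⟨x, ⟨hxS, hxe⟩, hbx⟩

theorem Ordinal.lift_cof_le_mk_of_cofinal {o : Ordinal.{u}} {s : Set Ordinal.{u}}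
    (hs : s ⊆ Iio o) (hcof : ∀ b < o, ∃ x ∈ s, b ≤ x) : Cardinal.lift.{u + 1} o.cof ≤ #s := by
  have hcofinal : IsCofinal ((↑) ⁻¹' s : Set (Iio o)) := fun b =>
    let ⟨x, hx, hbx⟩ := hcof b b.2
    ⟨⟨x, hs hx⟩, hx, hbx⟩
  have hrange : s ⊆ range ((↑) : Iio o → Ordinal) := fun x hx => ⟨⟨x, hs hx⟩, rfl⟩
  rw [Ordinal.lift_cof, ← Ordinal.cof_Iio,
    ← mk_preimage_of_injective_of_subset_range _ s Subtype.val_injective hrange]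
  exact Order.cof_le hcofinal

theorem StatIn.lift_cof_le_mk_inter {S e : Set Ordinal.{u}} {d : Ordinal.{u}} (hS : StatIn S d)
    (he : ClubIn e d) : Cardinal.lift.{u + 1} d.cof ≤ #(S ∩ e : Set Ordinal.{u}) :=
  Ordinal.lift_cof_le_mk_of_cofinal (fun _ hx => hS.1 hx.1)
    fun _ hb => hS.exists_mem_inter_ge he hb

theorem Cardinal.IsRegular.sSup_lt_ord {k : Cardinal.{u}} (hk : k.IsRegular)
    {s : Set Ordinal.{u}} (hs : s ⊆ Iio k.ord) (hmk : #s < Cardinal.lift.{u + 1} k) :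
    sSup s < k.ord :=
  Ordinal.sSup_lt_of_lt_cof (by rwa [← Ordinal.lift_cof, hk.cof_ord]) hs

theorem StatIn.not_strictMonoOn_of_forall_le {S e : Set Ordinal.{u}} {d c : Ordinal.{u}}
    {k : Cardinal.{u}} {f : Ordinal.{u} → Ordinal.{u}} (hk : ℵ₀ ≤ k) (hd : d.cof = k)
    (hS : StatIn S d) (hc : c < k.ord) (hfS : ∀ a ∈ S, f a ≤ c) (he : ClubIn e d) :
    ¬ StrictMonoOn f e := by
  intro hmono
  have hsucc : Order.succ c < k.ord := (isSuccLimit_ord hk).succ_lt hc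
  have hmaps : MapsTo f (S ∩ e) (Iio (Order.succ c)) := fun a ha =>
    Order.lt_succ_iff.2 (hfS a ha.1)
  have hle : #(S ∩ e : Set Ordinal.{u}) ≤ Cardinal.lift.{u + 1} (Order.succ c).card := by
    rw [← Cardinal.mk_Iio_ordinal, ← mk_image_eq_of_injOn f _ (hmono.injOn.mono inter_subset_right)]
    exact mk_le_mk_of_subset hmaps.image_subset
  have hlt : (Order.succ c).card < k := Cardinal.lt_ord.1 hsucc
  have hge := hS.lift_cof_le_mk_inter he
  rw [hd] at hge
  exact (hge.trans hle).not_gt (Cardinal.lift_lt.2 hlt)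

theorem stmt10_general (k : Cardinal) (hk : k.IsRegular)
    (l : Ordinal)
    (G : Ordinal → Set Ordinal) (g : Ordinal → Ordinal)
    (hG2 : ∀ a < l, G a ⊆ Set.Iio k.ord)
    (hG3 : ∀ a < l, Cardinal.mk ↥(G a) < Cardinal.lift.{1,0} k)
    (hg : ∀ a < l, g a = sSup (G a))
    (d : Ordinal) (hd1 : d < l) (hd2 : d.cof = k)
    (S : Set Ordinal) (hS : StatIn S d) (c : Ordinal) (hc : ∀ a ∈ S, g a = c) :
    ∀ f : Ordinal → Ordinal, (∀ a < l, f a ∈ G a) →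
      (∀ a ∈ S, f a ≤ c) ∧ ∀ e, ClubIn e d → ¬ StrictMonoOn f e := by
  intro f hf
  have hlt_l : ∀ a ∈ S, a < l := fun a ha => (hS.1 ha).trans hd1
  have hfS : ∀ a ∈ S, f a ≤ c := fun a ha => by
    rw [← hc a ha, hg a (hlt_l a ha)]
    exact le_csSup ⟨k.ord, fun x hx => (hG2 a (hlt_l a ha) hx).le⟩ (hf a (hlt_l a ha))
  refine ⟨hfS, fun e he => ?_⟩
  obtain ⟨a, haS, -⟩ := hS.2 e he
  have hc_lt : c < k.ord := by
    rw [← hc a haS, hg a (hlt_l a haS)]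
    exact hk.sSup_lt_ord (hG2 a (hlt_l a haS)) (hG3 a (hlt_l a haS))
  exact hS.not_strictMonoOn_of_forall_le hk.aleph0_le hd2 hc_lt hfS he

/-- Core of preservation of weak reflection by `κ`-cc forcing: if `g α = sup G_α`
(`G_α ⊆ κ` nonempty of size `< κ`) is constant `= c` on a stationary `S ⊆ δ`, then any
choice function `f α ∈ G_α` is bounded by `c` on `S`, hence not strictly increasing on
any club of `δ`. -/
theorem stmt10 (k : Cardinal) (hk : k.IsRegular) (hk2 : Cardinal.aleph0 < k)
    (l : Ordinal) (hl : k.ord < l) (hlc : l.card.ord = l) (hwr : WRefl l k)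
    (G : Ordinal → Set Ordinal) (g : Ordinal → Ordinal)
    (hG1 : ∀ a < l, (G a).Nonempty) (hG2 : ∀ a < l, G a ⊆ Set.Iio k.ord)
    (hG3 : ∀ a < l, Cardinal.mk ↥(G a) < Cardinal.lift.{1,0} k)
    (hg : ∀ a < l, g a = sSup (G a))
    (d : Ordinal) (hd1 : d < l) (hd2 : d.cof = k)
    (S : Set Ordinal) (hS : StatIn S d) (c : Ordinal) (hc : ∀ a ∈ S, g a = c) :
    ∀ f : Ordinal → Ordinal, (∀ a < l, f a ∈ G a) →
      (∀ a ∈ S, f a ≤ c) ∧ ∀ e, ClubIn e d → ¬ StrictMonoOn f e :=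
  stmt10_general k hk l G g hG2 hG3 hg d hd1 hd2 S hS c hc
end

section
/- Let κ < σ be regular uncountable cardinals and P(κ,σ) the strong non-reflection forcing. Let ⟨p_ξ : ξ < ζ⟩ be an increasing (under extension) sequence of conditions, where ζ < σ is a limit ordinal with cf(ζ) ≠ κ, such that sup of the domains, γ = sup_ξ dom(p_ξ), has cofinality ≠ κ. Then the union p = ⋃_ξ p_ξ is a condition in P(κ,σ). -/
/-! Each point below `γ` lies in the domain of some `p_ξ`, and coherence of the chain makes the
value of the union there independent of the choice of `ξ`. Regularity of `σ` keeps `γ < σ`, and a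
requirement at `β < γ` is already met inside a single `p_ξ` with `β < dom p_ξ`: its club lies
below `β`, where the union agrees with `p_ξ`. -/

open Set Cardinal

/-- The strong non-reflection forcing `P(κ,σ)`: conditions are pairs `(α, p)` with
`α < σ.ord`, `p : α → κ.ord` (normalized to `0` off `α`), such that every `β < α` of
cofinality `κ` has a club on which `p` is strictly increasing. -/
def Pks (k s : Cardinal) : Set (Ordinal × (Ordinal → Ordinal)) :=
  {q | q.1 < s.ord ∧ (∀ a < q.1, q.2 a < k.ord) ∧ (∀ a, ¬ a < q.1 → q.2 a = 0) ∧
    ∀ b < q.1, b.cof = k → ∃ c, ClubIn c b ∧ StrictMonoOn q.2 c}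

universe u

theorem sSup_image_Iio_lt_ord_of_isRegular {c : Cardinal.{u}} (hc : c.IsRegular)
    {ζ : Ordinal.{u}} (hζ : ζ < c.ord) {d : Ordinal.{u} → Ordinal.{u}} (hd : ∀ ξ < ζ, d ξ < c.ord) :
    sSup (d '' Iio ζ) < c.ord := by
  refine Ordinal.sSup_lt_of_lt_cof ?_ (by rintro _ ⟨ξ, hξ, rfl⟩; exact hd ξ hξ)
  calc #(d '' Iio ζ) ≤ #(Iio ζ) := mk_image_le
    _ = lift.{u + 1} ζ.card := mk_Iio_ordinal ζ
    _ < lift.{u + 1} c := lift_lt.mpr (lt_ord.mp hζ)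
    _ = (Ordinal.lift.{u + 1} c.ord).cof := by rw [← Ordinal.lift_cof, hc.cof_ord]

theorem lt_sSup_image_Iio_iff {ζ a : Ordinal.{u}} {d : Ordinal.{u} → Ordinal.{u}} :
    a < sSup (d '' Iio ζ) ↔ ∃ ξ < ζ, a < d ξ := by
  rw [lt_csSup_iff' (Ordinal.bddAbove_image bddAbove_Iio d)]
  simp only [mem_image, mem_Iio, exists_exists_and_eq_and]

theorem mem_Pks_of_forall_lt_exists {k s : Cardinal} {q : Ordinal × (Ordinal → Ordinal)}
    (hq : q.1 < s.ord) (hzero : ∀ a, ¬ a < q.1 → q.2 a = 0)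
    (hcover : ∀ a < q.1, ∃ p ∈ Pks k s, a < p.1 ∧ ∀ x < p.1, q.2 x = p.2 x) :
    q ∈ Pks k s := by
  refine ⟨hq, fun a ha => ?_, hzero, fun b hb hbk => ?_⟩
  · obtain ⟨p, hp, hap, hqp⟩ := hcover a ha
    exact hqp a hap ▸ hp.2.1 a hap
  · obtain ⟨p, hp, hbp, hqp⟩ := hcover b hb
    obtain ⟨c, hc, hmono⟩ := hp.2.2.2 b hbp hbk
    exact ⟨c, hc, hmono.congr fun x hx => (hqp x ((hc.1 hx).trans hbp)).symm⟩

section ChainUnion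

variable {ζ : Ordinal} {d : Ordinal → Ordinal} {F : Ordinal → Ordinal → Ordinal}

open Classical in
noncomputable def chainUnion (ζ : Ordinal) (d : Ordinal → Ordinal)
    (F : Ordinal → Ordinal → Ordinal) (a : Ordinal) : Ordinal :=
  if h : ∃ ξ < ζ, a < d ξ then F h.choose a else 0

theorem chainUnion_eq
    (hcoh : ∀ ξ < ζ, ∀ ξ', ξ ≤ ξ' → ξ' < ζ → ∀ a < d ξ, F ξ' a = F ξ a)
    {ξ a : Ordinal} (hξ : ξ < ζ) (ha : a < d ξ) : chainUnion ζ d F a = F ξ a := by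
  have h : ∃ ξ < ζ, a < d ξ := ⟨ξ, hξ, ha⟩
  obtain ⟨hη, haη⟩ := h.choose_spec
  rw [chainUnion, dif_pos h]
  rcases le_total ξ h.choose with hle | hle
  · exact hcoh ξ hξ _ hle hη a ha
  · exact (hcoh _ hη ξ hle hξ a haη).symm

theorem chainUnion_eq_zero {a : Ordinal} (ha : ¬ ∃ ξ < ζ, a < d ξ) :
    chainUnion ζ d F a = 0 := by
  rw [chainUnion, dif_neg ha]

theorem chainUnion_mem_Pks {k s : Cardinal} (hs : s.IsRegular) (hζ : ζ < s.ord)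
    (hmem : ∀ ξ < ζ, (d ξ, F ξ) ∈ Pks k s)
    (hcoh : ∀ ξ < ζ, ∀ ξ', ξ ≤ ξ' → ξ' < ζ → ∀ a < d ξ, F ξ' a = F ξ a) :
    (sSup (d '' Iio ζ), chainUnion ζ d F) ∈ Pks k s := by
  refine mem_Pks_of_forall_lt_exists ?_ (fun a ha => ?_) (fun a ha => ?_)
  · exact sSup_image_Iio_lt_ord_of_isRegular hs hζ fun ξ hξ => (hmem ξ hξ).1
  · exact chainUnion_eq_zero (F := F) (mt lt_sSup_image_Iio_iff.mpr ha)
  · obtain ⟨ξ, hξ, haξ⟩ := lt_sSup_image_Iio_iff.mp ha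
    exact ⟨_, hmem ξ hξ, haξ, fun x hx => chainUnion_eq hcoh hξ hx⟩

end ChainUnion

theorem stmt14_general (k s : Cardinal)
    (hs : s.IsRegular)
    (ζ : Ordinal) (hζ : ζ < s.ord)
    (d : Ordinal → Ordinal) (F : Ordinal → Ordinal → Ordinal)
    (hmem : ∀ ξ < ζ, (d ξ, F ξ) ∈ Pks k s)
    (hmono : ∀ ξ < ζ, ∀ ξ', ξ ≤ ξ' → ξ' < ζ →
      d ξ ≤ d ξ' ∧ ∀ a < d ξ, F ξ' a = F ξ a)
    (γ : Ordinal) (hγ : γ = sSup (d '' Set.Iio ζ)) :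
    ∃ q ∈ Pks k s, q.1 = γ ∧ ∀ ξ < ζ, ∀ a < d ξ, q.2 a = F ξ a := by
  have hcoh : ∀ ξ < ζ, ∀ ξ', ξ ≤ ξ' → ξ' < ζ → ∀ a < d ξ, F ξ' a = F ξ a :=
    fun ξ hξ ξ' hle hξ' => (hmono ξ hξ ξ' hle hξ').2
  subst hγ
  exact ⟨_, chainUnion_mem_Pks hs hζ hmem hcoh, rfl,
    fun ξ hξ a ha => chainUnion_eq hcoh hξ ha⟩

/-- The union of an increasing chain of conditions, of limit length `ζ < σ` with
`cf ζ ≠ κ`, whose supremum of domains `γ` has cofinality `≠ κ`, is a condition. -/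
theorem stmt14 (k s : Cardinal) (hk : k.IsRegular) (hk2 : Cardinal.aleph0 < k)
    (hs : s.IsRegular) (hs2 : Cardinal.aleph0 < s) (hks : k < s)
    (ζ : Ordinal) (hζ : ζ < s.ord) (hζl : Order.IsSuccLimit ζ) (hζc : ζ.cof ≠ k)
    (d : Ordinal → Ordinal) (F : Ordinal → Ordinal → Ordinal)
    (hmem : ∀ ξ < ζ, (d ξ, F ξ) ∈ Pks k s)
    (hmono : ∀ ξ < ζ, ∀ ξ', ξ ≤ ξ' → ξ' < ζ →
      d ξ ≤ d ξ' ∧ ∀ a < d ξ, F ξ' a = F ξ a)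
    (γ : Ordinal) (hγ : γ = sSup (d '' Set.Iio ζ)) (hγc : γ.cof ≠ k) :
    ∃ q ∈ Pks k s, q.1 = γ ∧ ∀ ξ < ζ, ∀ a < d ξ, q.2 a = F ξ a :=
  stmt14_general k s hs ζ hζ d F hmem hmono γ hγ
end
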